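/- arXiv:math-ph/0204016 — 4 statements merged into one kernel-verified Lean document; each statement's English description precedes it below -/
import Mathlib

section
/- Let U be a unitary operator on ℓ²(ℤ) whose matrix in the canonical orthonormal basis (φ_k)_{k∈ℤ} is tridiagonal, i.e. ⟨φ_j, U φ_k⟩ = 0 whenever |j−k| > 1. Then at least one of the following holds: (i) for every k ∈ ℤ, U φ_k = c_k φ_{k+1} with |c_k| = 1 (U is a forward shift with unimodular weights); (ii) for every k ∈ ℤ, U φ_k = c_k φ_{k−1} with |c_k| = 1 (U is a backward shift with unimodular weights); (iii) there exists a partition of ℤ into consecutive intervals, each of length 1 or 2, such that for every interval I of the partition the subspace span{φ_m : m ∈ I} is invariant under U (U is an infinite direct sum of 1×1 and 2×2 unitary blocks). -/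
noncomputable section

/-- The Hilbert space `ℓ²(ℤ)`. -/
abbrev H : Type := lp (fun _ : ℤ => ℂ) 2

/-- The canonical orthonormal basis vector `φ_k` of `ℓ²(ℤ)`. -/
def phi (k : ℤ) : H := lp.single 2 k 1

end

/-!
Write `d k = ⟨φ_{k+1}, U φ_k⟩` and `p k = ⟨φ_k, U φ_{k+1}⟩` for the off-diagonal entries.
Column `k + 1` and row `k + 1` of `U` are unit vectors sharing their diagonal entry, so
`|d k|² - |p k|²` does not depend on `k`. Columns `k - 1` and `k + 1` are orthogonal and
overlap only in row `k`, so each row (and likewise each column) has at most one nonzero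
off-diagonal entry. If the constant is positive, every `d k` is nonzero, which kills all
other entries and leaves a forward shift; if it is negative, the same holds for `U*`. If it
is zero, `d k` and `p k` vanish together, no two consecutive of them are nonzero, and joining
`k` with `k + 1` whenever `d k ≠ 0` partitions `ℤ` into invariant blocks of length one or two.
-/

open ComplexConjugate
open scoped InnerProductSpace

lemma inner_phi_left (j : ℤ) (x : H) : ⟪phi j, x⟫_ℂ = x j := by
  simp [phi, lp.inner_single_left]

lemma phi_apply (k j : ℤ) : phi k j = if j = k then 1 else 0 := by
  simp [phi, Pi.single_apply]

lemma inner_phi_phi (j k : ℤ) : ⟪phi j, phi k⟫_ℂ = if j = k then 1 else 0 := by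
  rw [inner_phi_left, phi_apply]

noncomputable def entry (T : H →L[ℂ] H) (j k : ℤ) : ℂ := ⟪phi j, T (phi k)⟫_ℂ

lemma entry_star (T : H →L[ℂ] H) (j k : ℤ) : entry (star T) j k = conj (entry T k j) := by
  rw [entry, entry, ContinuousLinearMap.star_eq_adjoint,
    ContinuousLinearMap.adjoint_inner_right, inner_conj_symm]

def IsTridiagonal (T : H →L[ℂ] H) : Prop := ∀ j k : ℤ, 1 < |j - k| → entry T j k = 0

namespace IsTridiagonal

variable {T : H →L[ℂ] H} (hT : IsTridiagonal T)
include hT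

lemma star : IsTridiagonal (star T) := fun j k hjk => by
  rw [entry_star, hT k j (by rwa [abs_sub_comm]), map_zero]

lemma apply_phi (k : ℤ) :
    T (phi k) = entry T (k - 1) k • phi (k - 1) + entry T k k • phi k
      + entry T (k + 1) k • phi (k + 1) := by
  ext j
  simp only [lp.coeFn_add, lp.coeFn_smul, Pi.add_apply, Pi.smul_apply, smul_eq_mul, phi_apply]
  rw [← inner_phi_left, ← entry]
  by_cases hj : 1 < |j - k|
  · have := lt_abs.1 hj
    simp (disch := omega) only [hT j k hj, if_neg, mul_zero, add_zero]
  · rw [not_lt, abs_le] at hj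
    obtain rfl | rfl | rfl : j = k - 1 ∨ j = k ∨ j = k + 1 := by omega
    all_goals simp (disch := omega) only [if_true, if_neg, mul_one, mul_zero, add_zero, zero_add]

lemma inner_apply_phi_apply_phi (j k : ℤ) :
    ⟪T (phi j), T (phi k)⟫_ℂ = conj (entry T (j - 1) j) * entry T (j - 1) k
      + conj (entry T j j) * entry T j k + conj (entry T (j + 1) j) * entry T (j + 1) k := by
  rw [hT.apply_phi j]
  simp only [inner_add_left, inner_smul_left, entry]

end IsTridiagonal

lemma smul_phi_mem_span {I : Set ℤ} {j : ℤ} {c : ℂ} (h : j ∈ I ∨ c = 0) :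
    c • phi j ∈ Submodule.span ℂ (phi '' I) := by
  rcases h with hj | rfl
  · exact Submodule.smul_mem _ c (Submodule.subset_span (Set.mem_image_of_mem phi hj))
  · rw [zero_smul]
    exact zero_mem _

lemma IsTridiagonal.apply_phi_mem_span {T : H →L[ℂ] H} (hT : IsTridiagonal T) {I : Set ℤ}
    {n : ℤ} (hn : n ∈ I) (hlo : n - 1 ∈ I ∨ entry T (n - 1) n = 0)
    (hhi : n + 1 ∈ I ∨ entry T (n + 1) n = 0) :
    T (phi n) ∈ Submodule.span ℂ (phi '' I) := by
  rw [hT.apply_phi n]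
  exact add_mem (add_mem (smul_phi_mem_span hlo) (smul_phi_mem_span (Or.inl hn)))
    (smul_phi_mem_span hhi)

lemma apply_mem_span_phi {T : H →L[ℂ] H} {I : Set ℤ}
    (h : ∀ n ∈ I, T (phi n) ∈ Submodule.span ℂ (phi '' I)) {x : H}
    (hx : x ∈ Submodule.span ℂ (phi '' I)) : T x ∈ Submodule.span ℂ (phi '' I) :=
  (Submodule.span_le (p := (Submodule.span ℂ (phi '' I)).comap (T : H →ₗ[ℂ] H))).2
    (Set.image_subset_iff.2 h) hx

section Partition

/-- The block of `n` in the partition of `ℤ` obtained by joining `k` and `k + 1` whenever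
`link k` holds. -/
def linkBlock (link : ℤ → Prop) (n : ℤ) : Set ℤ :=
  {j | j = n ∨ (j = n + 1 ∧ link n) ∨ (j = n - 1 ∧ link (n - 1))}

variable {link : ℤ → Prop} (hlink : ∀ k, link k → ¬ link (k + 1))
include hlink

lemma linkBlock_eq_of_mem {n x : ℤ} (hx : x ∈ linkBlock link n) :
    linkBlock link x = linkBlock link n := by
  ext j
  simp only [linkBlock, Set.mem_ofPred_eq] at hx ⊢
  rcases hx with rfl | ⟨rfl, hn⟩ | ⟨rfl, hn⟩ <;> grind

lemma linkBlock_eq_singleton_or_pair (n : ℤ) :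
    (∃ m, linkBlock link n = {m}) ∨ (∃ m, linkBlock link n = {m, m + 1}) := by
  by_cases hn : link n
  · refine Or.inr ⟨n, Set.ext fun j => ?_⟩
    simp only [linkBlock, Set.mem_ofPred_eq, Set.mem_insert_iff, Set.mem_singleton_iff]
    grind
  by_cases hn' : link (n - 1)
  · refine Or.inr ⟨n - 1, Set.ext fun j => ?_⟩
    simp only [linkBlock, Set.mem_ofPred_eq, Set.mem_insert_iff, Set.mem_singleton_iff]
    grind
  · refine Or.inl ⟨n, Set.ext fun j => ?_⟩
    simp only [linkBlock, Set.mem_ofPred_eq, Set.mem_singleton_iff]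
    tauto

theorem exists_partition_of_link :
    ∃ blocks : Set (Set ℤ),
      (∀ I ∈ blocks, (∃ m : ℤ, I = {m}) ∨ (∃ m : ℤ, I = {m, m + 1})) ∧
      (∀ I ∈ blocks, ∀ J ∈ blocks, I ≠ J → Disjoint I J) ∧
      (⋃ I ∈ blocks, I) = Set.univ ∧
      (∀ I ∈ blocks, ∀ n ∈ I, (link (n - 1) → n - 1 ∈ I) ∧ (link n → n + 1 ∈ I)) := by
  refine ⟨Set.range (linkBlock link), ?_, ?_, ?_, ?_⟩
  · rintro _ ⟨n, rfl⟩
    exact linkBlock_eq_singleton_or_pair hlink n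
  · rintro _ ⟨n, rfl⟩ _ ⟨m, rfl⟩ hnm
    refine Set.disjoint_left.2 fun x hxn hxm => hnm ?_
    rw [← linkBlock_eq_of_mem hlink hxn, linkBlock_eq_of_mem hlink hxm]
  · refine Set.eq_univ_of_forall fun n => Set.mem_biUnion ⟨n, rfl⟩ (Or.inl rfl)
  · rintro _ ⟨n, rfl⟩ x hx
    rw [← linkBlock_eq_of_mem hlink hx]
    exact ⟨fun h => Or.inr (Or.inr ⟨rfl, h⟩), fun h => Or.inr (Or.inl ⟨rfl, h⟩)⟩

end Partition

section Unitary

variable {U : H →L[ℂ] H} (hU : U ∈ unitary (H →L[ℂ] H))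
include hU

lemma apply_phi_eq_of_star_apply_phi {c : ℤ → ℂ}
    (hc : ∀ k, ‖c k‖ = 1 ∧ star U (phi k) = c k • phi (k + 1)) (k : ℤ) :
    U (phi k) = conj (c (k - 1)) • phi (k - 1) := by
  have h : phi (k - 1) = c (k - 1) • U (phi k) := by
    have := congrArg U (hc (k - 1)).2
    rwa [← mul_apply_eq_comp, Unitary.mul_star_self_of_mem hU, sub_add_cancel,
      one_apply_eq_self, map_smul] at this
  rw [h, smul_smul, Complex.conj_mul', (hc (k - 1)).1]
  simp

variable (hT : IsTridiagonal U)
include hT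

lemma inner_column_column (j k : ℤ) :
    conj (entry U (j - 1) j) * entry U (j - 1) k + conj (entry U j j) * entry U j k
      + conj (entry U (j + 1) j) * entry U (j + 1) k = if j = k then 1 else 0 := by
  rw [← hT.inner_apply_phi_apply_phi, ContinuousLinearMap.inner_map_map_of_mem_unitary hU,
    inner_phi_phi]

lemma norm_sq_column (k : ℤ) :
    ‖entry U (k - 1) k‖ ^ 2 + ‖entry U k k‖ ^ 2 + ‖entry U (k + 1) k‖ ^ 2 = 1 := by
  have h := inner_column_column hU hT k k
  simp only [Complex.conj_mul', if_true] at h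
  exact_mod_cast h

lemma norm_sq_row (k : ℤ) :
    ‖entry U k (k - 1)‖ ^ 2 + ‖entry U k k‖ ^ 2 + ‖entry U k (k + 1)‖ ^ 2 = 1 := by
  simpa only [entry_star, RCLike.norm_conj] using
    norm_sq_column (Unitary.star_mem hU) hT.star k

lemma entry_left_eq_zero_or_entry_right_eq_zero (k : ℤ) :
    entry U k (k - 1) = 0 ∨ entry U k (k + 1) = 0 := by
  have h := inner_column_column hU hT (k - 1) (k + 1)
  rw [hT (k - 1 - 1) (k + 1) (by rw [lt_abs]; omega), hT (k - 1) (k + 1) (by rw [lt_abs]; omega),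
    if_neg (by omega), sub_add_cancel] at h
  simpa using h

lemma entry_above_eq_zero_or_entry_below_eq_zero (k : ℤ) :
    entry U (k - 1) k = 0 ∨ entry U (k + 1) k = 0 := by
  simpa only [entry_star, map_eq_zero] using
    entry_left_eq_zero_or_entry_right_eq_zero (Unitary.star_mem hU) hT.star k

lemma inner_column_pred_column (k : ℤ) :
    conj (entry U (k - 1) (k - 1)) * entry U (k - 1) k + conj (entry U k (k - 1)) * entry U k k
      = 0 := by
  have h := inner_column_column hU hT (k - 1) k
  rwa [hT (k - 1 - 1) k (by rw [lt_abs]; omega), if_neg (by omega), mul_zero, zero_add,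
    sub_add_cancel] at h

lemma norm_sq_sub_norm_sq_entry_eq (k : ℤ) :
    ‖entry U (k + 1) k‖ ^ 2 - ‖entry U k (k + 1)‖ ^ 2
      = ‖entry U 1 0‖ ^ 2 - ‖entry U 0 1‖ ^ 2 := by
  have hper : Function.Periodic (fun k : ℤ => ‖entry U (k + 1) k‖ ^ 2 - ‖entry U k (k + 1)‖ ^ 2)
      1 := fun m => by
    have hc := norm_sq_column hU hT (m + 1)
    have hr := norm_sq_row hU hT (m + 1)
    simp only [add_sub_cancel_right] at hc hr ⊢
    linarith
  simpa using hper.int_mul_eq k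

lemma exists_forward_shift (hd : ∀ k, entry U (k + 1) k ≠ 0) :
    ∃ c : ℤ → ℂ, ∀ k, ‖c k‖ = 1 ∧ U (phi k) = c k • phi (k + 1) := by
  have hp (k : ℤ) : entry U (k - 1) k = 0 :=
    (entry_above_eq_zero_or_entry_below_eq_zero hU hT k).resolve_right (hd k)
  have hb (k : ℤ) : entry U k k = 0 := by
    have h := inner_column_pred_column hU hT k
    rw [hp k, mul_zero, zero_add, mul_eq_zero, map_eq_zero] at h
    exact h.resolve_left (by simpa using hd (k - 1))
  refine ⟨fun k => entry U (k + 1) k, fun k => ⟨?_, ?_⟩⟩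
  · have h := norm_sq_column hU hT k
    rw [hp k, hb k, norm_zero, zero_pow two_ne_zero, zero_add, zero_add] at h
    exact (pow_eq_one_iff_of_nonneg (norm_nonneg _) two_ne_zero).1 h
  · rw [hT.apply_phi k, hp k, hb k, zero_smul, zero_smul, zero_add, zero_add]

lemma exists_backward_shift (hp : ∀ k, entry U k (k + 1) ≠ 0) :
    ∃ c : ℤ → ℂ, ∀ k, ‖c k‖ = 1 ∧ U (phi k) = c k • phi (k - 1) := by
  obtain ⟨c, hc⟩ := exists_forward_shift (Unitary.star_mem hU) hT.star
    fun k => by simpa [entry_star] using hp k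
  exact ⟨fun k => conj (c (k - 1)), fun k =>
    ⟨by simp [(hc _).1], apply_phi_eq_of_star_apply_phi hU hc k⟩⟩

lemma exists_invariant_blocks (h : ∀ k, ‖entry U (k + 1) k‖ = ‖entry U k (k + 1)‖) :
    ∃ blocks : Set (Set ℤ),
      (∀ I ∈ blocks, (∃ m : ℤ, I = {m}) ∨ (∃ m : ℤ, I = {m, m + 1})) ∧
      (∀ I ∈ blocks, ∀ J ∈ blocks, I ≠ J → Disjoint I J) ∧
      (⋃ I ∈ blocks, I) = Set.univ ∧
      (∀ I ∈ blocks, ∀ x ∈ Submodule.span ℂ (phi '' I), U x ∈ Submodule.span ℂ (phi '' I)) := by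
  have hlink (k : ℤ) (hk : entry U (k + 1) k ≠ 0) : ¬ entry U (k + 1 + 1) (k + 1) ≠ 0 := by
    rw [Ne, ← norm_eq_zero, h, norm_eq_zero] at hk
    simpa [hk] using entry_above_eq_zero_or_entry_below_eq_zero hU hT (k + 1)
  obtain ⟨blocks, hshape, hdisj, hcover, hclosed⟩ := exists_partition_of_link hlink
  refine ⟨blocks, hshape, hdisj, hcover, fun I hI _ => apply_mem_span_phi fun n hn => ?_⟩
  refine hT.apply_phi_mem_span hn ?_ ?_
  · by_cases hd : entry U (n - 1 + 1) (n - 1) = 0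
    · rw [← norm_eq_zero, h, norm_eq_zero, sub_add_cancel] at hd
      exact Or.inr hd
    · exact Or.inl ((hclosed I hI n hn).1 hd)
  · by_cases hd : entry U (n + 1) n = 0
    · exact Or.inr hd
    · exact Or.inl ((hclosed I hI n hn).2 hd)

end Unitary

/-- A unitary tridiagonal operator on `ℓ²(ℤ)` is either a forward shift with unimodular
weights, or a backward shift with unimodular weights, or an infinite direct sum of `1×1`
and `2×2` unitary blocks: there is a partition of `ℤ` into consecutive intervals of
length `1` or `2` whose associated coordinate subspaces are invariant under `U`. -/
theorem tridiagonal_unitary_classification (U : H →L[ℂ] H)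
    (hunit : U ∈ unitary (H →L[ℂ] H))
    (htri : ∀ j k : ℤ, 1 < |j - k| → inner (𝕜 := ℂ) (phi j) (U (phi k)) = 0) :
    -- (i) forward shift with unimodular weights
    (∃ c : ℤ → ℂ, ∀ k : ℤ, ‖c k‖ = 1 ∧ U (phi k) = c k • phi (k + 1)) ∨
    -- (ii) backward shift with unimodular weights
    (∃ c : ℤ → ℂ, ∀ k : ℤ, ‖c k‖ = 1 ∧ U (phi k) = c k • phi (k - 1)) ∨
    -- (iii) direct sum of 1×1 and 2×2 blocks
    (∃ blocks : Set (Set ℤ),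
      (∀ I ∈ blocks, (∃ m : ℤ, I = {m}) ∨ (∃ m : ℤ, I = {m, m + 1})) ∧
      (∀ I ∈ blocks, ∀ J ∈ blocks, I ≠ J → Disjoint I J) ∧
      (⋃ I ∈ blocks, I) = Set.univ ∧
      (∀ I ∈ blocks, ∀ x ∈ Submodule.span ℂ (phi '' I),
        U x ∈ Submodule.span ℂ (phi '' I))) := by
  have hconst := norm_sq_sub_norm_sq_entry_eq hunit htri
  rcases lt_trichotomy (‖entry U 1 0‖ ^ 2 - ‖entry U 0 1‖ ^ 2) 0 with hneg | hzero | hpos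
  · refine Or.inr (Or.inl (exists_backward_shift hunit htri fun k hk => ?_))
    have := hconst k
    rw [hk, norm_zero] at this
    linarith [sq_nonneg ‖entry U (k + 1) k‖]
  · refine Or.inr (Or.inr (exists_invariant_blocks hunit htri fun k => ?_))
    have := hconst k
    rw [hzero, sub_eq_zero] at this
    exact (pow_left_inj₀ (norm_nonneg _) (norm_nonneg _) two_ne_zero).1 this
  · refine Or.inl (exists_forward_shift hunit htri fun k hk => ?_)
    have := hconst k
    rw [hk, norm_zero] at this
    linarith [sq_nonneg ‖entry U k (k + 1)‖]
end

section
/- Let (θ_k)_{k∈ℤ} and (α_k)_{k∈ℤ} be mutually independent random variables, each uniformly distributed on the torus 𝕋 = ℝ/2πℤ. Fix λ ∈ ℝ and for k ∈ ℤ set η_k = θ_k + θ_{k−1} + α_k − α_{k−1} + λ (computed in 𝕋) and δ_k = (η_{2k}, η_{2k−1}) ∈ 𝕋². Then the random vectors (δ_k)_{k∈ℤ} are independent and identically distributed, each uniformly distributed on 𝕋². -/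
/-!
Write `η_k = θ_k + (θ_{k-1} + α_k - α_{k-1} + λ)`. The bracket, and every `η_j` with `j < k`, is a
function of the phases other than `θ_k`. As `θ_k` is uniform and independent of those phases,
translation invariance of Haar measure makes `η_k` uniform and independent of `(η_j)_{j<k}`.
Hence the `η_k` are i.i.d. uniform, and the `δ_k` are built from disjoint pairs of them.
-/

open MeasureTheory ProbabilityTheory AddCircle

instance : Fact (0 < 2 * Real.pi) := ⟨by positivity⟩

namespace ProbabilityTheory

section Shear

variable {Ω G E : Type*} [MeasurableSpace Ω] {μ : Measure Ω} [IsProbabilityMeasure μ]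
  [AddGroup G] [MeasurableSpace G] [MeasurableAdd₂ G] {ν : Measure G} [SFinite ν]
  [ν.IsAddRightInvariant] [MeasurableSpace E] {X : Ω → G} {Z : Ω → E} {f : E → G}

theorem IndepFun.map_add_comp_prodMk (hXZ : IndepFun X Z μ)
    (hX : Measurable X) (hZ : Measurable Z) (hf : Measurable f) (hlaw : μ.map X = ν) :
    μ.map (fun ω => (X ω + f (Z ω), Z ω)) = ν.prod (μ.map Z) := by
  have hjoint : μ.map (fun ω => (Z ω, X ω)) = (μ.map Z).prod ν := by
    rw [← hlaw]
    exact (indepFun_iff_map_prod_eq_prod_map_map hZ.aemeasurable hX.aemeasurable).1 hXZ.symm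
  have hshear : MeasurePreserving (fun p : E × G => (p.1, p.2 + f p.1))
      ((μ.map Z).prod ν) ((μ.map Z).prod ν) :=
    (MeasurePreserving.id _).skew_product (by fun_prop)
      (.of_forall fun z => map_add_right_eq_self ν (f z))
  calc μ.map (fun ω => (X ω + f (Z ω), Z ω))
      = ((μ.map (fun ω => (Z ω, X ω))).map (fun p => (p.1, p.2 + f p.1))).map Prod.swap := by
        rw [Measure.map_map (by fun_prop) (by fun_prop),
          Measure.map_map (by fun_prop) (by fun_prop)]
        rfl
    _ = ν.prod (μ.map Z) := by rw [hjoint, hshear.map_eq, Measure.prod_swap]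

theorem IndepFun.map_add_comp_eq (hXZ : IndepFun X Z μ)
    (hX : Measurable X) (hZ : Measurable Z) (hf : Measurable f) (hlaw : μ.map X = ν) :
    μ.map (fun ω => X ω + f (Z ω)) = ν := by
  have h := congrArg (Measure.map Prod.fst) (hXZ.map_add_comp_prodMk hX hZ hf hlaw)
  rwa [Measure.map_map measurable_fst (by fun_prop), Measure.map_fst_prod,
    Measure.map_apply hZ .univ, Set.preimage_univ, measure_univ, one_smul] at h

theorem IndepFun.add_comp (hXZ : IndepFun X Z μ)
    (hX : Measurable X) (hZ : Measurable Z) (hf : Measurable f) (hlaw : μ.map X = ν) :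
    IndepFun (fun ω => X ω + f (Z ω)) Z μ := by
  rw [indepFun_iff_map_prod_eq_prod_map_map (by fun_prop) hZ.aemeasurable,
    hXZ.map_add_comp_prodMk hX hZ hf hlaw, hXZ.map_add_comp_eq hX hZ hf hlaw]

end Shear

section Independence

variable {Ω ι β : Type*} [MeasurableSpace Ω] {μ : Measure Ω} [MeasurableSpace β]

theorem iIndepFun.indepFun_update [DecidableEq ι] {f : ι → Ω → β}
    (h : iIndepFun f μ) (hf : ∀ i, Measurable (f i)) (k : ι) (c : β) :
    IndepFun (f k) (fun ω => Function.update (fun i => f i ω) k c) μ := by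
  rw [IndepFun_iff_Indep]
  have hsplit := indep_iSup_of_disjoint (fun i => (hf i).comap_le) h.iIndep
    (disjoint_compl_right (a := ({k} : Set ι)))
  refine indep_of_indep_of_le_right (indep_of_indep_of_le_left hsplit ?_) ?_
  · exact le_iSup₂ (f := fun i (_ : i ∈ ({k} : Set ι)) => MeasurableSpace.comap (f i) _) k rfl
  · let mT : MeasurableSpace Ω := ⨆ j ∈ ({k} : Set ι)ᶜ, MeasurableSpace.comap (f j) ‹_›
    refine Measurable.comap_le (@measurable_pi_lambda Ω ι (fun _ => β) mT _ _ fun i => ?_)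
    rcases eq_or_ne i k with rfl | hik
    · simp only [Function.update_self]
      exact @measurable_const _ _ _ mT c
    · simp only [Function.update_of_ne hik]
      exact (comap_measurable (f i)).mono
        (le_iSup₂ (f := fun j (_ : j ∈ ({k} : Set ι)ᶜ) => MeasurableSpace.comap (f j) _) i hik)
        le_rfl

theorem iIndepFun_of_indepFun_finset_lt [LinearOrder ι] [IsProbabilityMeasure μ]
    {Y : ι → Ω → β}
    (h : ∀ i (S : Finset ι), (∀ j ∈ S, j < i) → IndepFun (Y i) (fun ω (j : S) => Y j ω) μ) :
    iIndepFun Y μ := by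
  rw [iIndepFun_iff_measure_inter_preimage_eq_mul]
  intro S sets hsets
  induction S using Finset.induction_on_max with
  | empty => simp
  | insert i S hlt ih =>
    have hpast : (⋂ j ∈ S, Y j ⁻¹' sets j)
        = (fun ω (j : S) => Y j ω) ⁻¹' Set.univ.pi (fun j : S => sets j) := by
      ext ω; simp
    rw [Finset.set_biInter_insert, Finset.prod_insert fun hi => (hlt i hi).false, hpast,
      (h i S hlt).measure_inter_preimage_eq_mul _ _ (hsets i (S.mem_insert_self i))
        (.univ_pi fun j => hsets j (S.mem_insert_of_mem j.2)),
      ← hpast, ih fun j hj => hsets j (S.mem_insert_of_mem hj)]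

theorem iIndepFun.curry {κ : Type*} [IsProbabilityMeasure μ]
    {X : ι → κ → Ω → β} (hX : ∀ i j, Measurable (X i j))
    (h : iIndepFun (fun p : ι × κ => X p.1 p.2) μ) :
    iIndepFun (fun i ω j => X i j ω) μ := by
  have _ i j : IsProbabilityMeasure (μ.map (X i j)) :=
    Measure.isProbabilityMeasure_map (hX i j).aemeasurable
  have hjoint : μ.map (fun ω (p : ι × κ) => X p.1 p.2 ω)
      = Measure.infinitePi fun p : ι × κ => μ.map (X p.1 p.2) :=
    (iIndepFun_iff_map_fun_eq_infinitePi_map fun p : ι × κ => hX p.1 p.2).1 h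
  have hblock i : μ.map (fun ω j => X i j ω) = Measure.infinitePi fun j => μ.map (X i j) :=
    (iIndepFun_iff_map_fun_eq_infinitePi_map (hX i)).1
      (h.precomp (Prod.mk_right_injective i) :)
  rw [iIndepFun_iff_map_fun_eq_infinitePi_map (fun i => by fun_prop)]
  calc μ.map (fun ω i j => X i j ω)
      = (μ.map (fun ω (p : ι × κ) => X p.1 p.2 ω)).map (MeasurableEquiv.curry ι κ β) := by
        rw [Measure.map_map (by fun_prop) (by fun_prop)]
        rfl
    _ = Measure.infinitePi fun i => μ.map (fun ω j => X i j ω) := by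
        rw [hjoint, Measure.infinitePi_map_curry (fun i j => μ.map (X i j))]
        simp only [hblock]

theorem iIndepFun.prodMk_of_injective [IsProbabilityMeasure μ] {κ : Type*} {f : ι → Ω → β}
    (h : iIndepFun f μ) (hf : ∀ i, Measurable (f i)) {p q : κ → ι}
    (hpq : Function.Injective (Sum.elim p q)) :
    iIndepFun (fun k ω => (f (p k) ω, f (q k) ω)) μ := by
  let g : κ × Bool → ι := fun x => Sum.elim p q (Equiv.boolProdEquivSum κ x.swap)
  have hg : g.Injective := hpq.comp ((Equiv.boolProdEquivSum κ).injective.comp Prod.swap_injective)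
  have hblocks := (h.precomp hg).curry (X := fun k b => f (g (k, b))) fun k b => hf _
  exact hblocks.comp (fun _ v => (v false, v true)) fun _ => by fun_prop

end Independence

end ProbabilityTheory

section Eta

variable {G : Type*} [AddCommGroup G]

/-- `y (.inl k)` stands for `θ_k` and `y (.inr k)` for `α_k`, so that `eta c y k` is `η_k`. -/
def eta (c : G) (y : ℤ ⊕ ℤ → G) (k : ℤ) : G :=
  y (.inl k) + y (.inl (k - 1)) + y (.inr k) - y (.inr (k - 1)) + c

theorem eta_update_of_lt (c : G) (y : ℤ ⊕ ℤ → G) (a : G) {j k : ℤ} (hjk : j < k) :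
    eta c (Function.update y (.inl k) a) j = eta c y j := by
  have h₀ : (.inl j : ℤ ⊕ ℤ) ≠ .inl k := by simpa using hjk.ne
  have h₁ : (.inl (j - 1) : ℤ ⊕ ℤ) ≠ .inl k := by simp only [ne_eq, Sum.inl.injEq]; omega
  simp [eta, Function.update_of_ne h₀, Function.update_of_ne h₁]

theorem eta_eq_add_eta_update (c : G) (y : ℤ ⊕ ℤ → G) (k : ℤ) :
    eta c y k = y (.inl k) + eta c (Function.update y (.inl k) 0) k := by
  have h₁ : (.inl (k - 1) : ℤ ⊕ ℤ) ≠ .inl k := by simp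
  simp only [eta, Function.update_self, Function.update_of_ne h₁,
    Function.update_of_ne Sum.inr_ne_inl]
  abel

variable [MeasurableSpace G] [MeasurableAdd₂ G] [MeasurableSub₂ G]

theorem measurable_eta (c : G) (k : ℤ) : Measurable fun y => eta c y k := by
  unfold eta; fun_prop

variable {Ω : Type*} [MeasurableSpace Ω] {μ : Measure Ω} [IsProbabilityMeasure μ]
  {ν : Measure G} [SFinite ν] [ν.IsAddRightInvariant]

theorem iIndepFun_eta_and_map_eq {θ α : ℤ → Ω → G} (hθ : ∀ k, Measurable (θ k))
    (hα : ∀ k, Measurable (α k)) (hind : iIndepFun (Sum.elim θ α) μ)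
    (hunif : ∀ k, μ.map (θ k) = ν) (c : G) :
    iIndepFun (fun k ω => eta c (fun i => Sum.elim θ α i ω) k) μ ∧
      ∀ k, μ.map (fun ω => eta c (fun i => Sum.elim θ α i ω) k) = ν := by
  have hθα : ∀ i, Measurable (Sum.elim θ α i) := Sum.rec hθ hα
  let F : Ω → ℤ ⊕ ℤ → G := fun ω i => Sum.elim θ α i ω
  let Z (k : ℤ) (ω : Ω) : ℤ ⊕ ℤ → G := Function.update (F ω) (.inl k) 0
  have hZ k : Measurable (Z k) := measurable_pi_lambda _ fun i => by
    rcases eq_or_ne i (.inl k) with rfl | hi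
    · simp only [Z, Function.update_self]
      exact measurable_const
    · simpa [Z, Function.update_of_ne hi] using hθα i
  have hfresh k : IndepFun (fun ω => eta c (F ω) k) (Z k) μ ∧
      μ.map (fun ω => eta c (F ω) k) = ν := by
    have hθZ : IndepFun (θ k) (Z k) μ := hind.indepFun_update hθα (.inl k) 0
    simp only [eta_eq_add_eta_update c (F _) k]
    exact ⟨hθZ.add_comp (hθ k) (hZ k) (measurable_eta c k) (hunif k),
      hθZ.map_add_comp_eq (hθ k) (hZ k) (measurable_eta c k) (hunif k)⟩
  refine ⟨iIndepFun_of_indepFun_finset_lt fun k S hS => ?_, fun k => (hfresh k).2⟩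
  have hpast : (fun ω (j : S) => eta c (F ω) j) = (fun y (j : S) => eta c y j) ∘ Z k :=
    funext fun ω => funext fun j => (eta_update_of_lt c (F ω) 0 (hS j j.2)).symm
  rw [hpast]
  exact (hfresh k).1.comp measurable_id (measurable_pi_lambda _ fun j => measurable_eta c j)

end Eta

theorem delta_iid_uniform_general
    {Ω : Type*} [MeasurableSpace Ω] (μ : Measure Ω) [IsProbabilityMeasure μ]
    (θ α : ℤ → Ω → AddCircle (2 * Real.pi))
    (hmeas_θ : ∀ k, Measurable (θ k)) (hmeas_α : ∀ k, Measurable (α k))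
    (hindep : iIndepFun (Sum.elim θ α) μ)
    (hunif_θ : ∀ k, μ.map (θ k) = haarAddCircle)
    (lam : ℝ)
    (η : ℤ → Ω → AddCircle (2 * Real.pi))
    (hη : ∀ k ω, η k ω = θ k ω + θ (k - 1) ω + α k ω - α (k - 1) ω
      + (lam : AddCircle (2 * Real.pi)))
    (δ : ℤ → Ω → AddCircle (2 * Real.pi) × AddCircle (2 * Real.pi))
    (hδ : ∀ k ω, δ k ω = (η (2 * k) ω, η (2 * k - 1) ω)) :
    iIndepFun δ μ ∧
    ∀ k : ℤ, μ.map (δ k) =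
      (haarAddCircle : Measure (AddCircle (2 * Real.pi))).prod haarAddCircle := by
  have hη_eta : η = fun k ω => eta (lam : AddCircle (2 * Real.pi)) (fun i => Sum.elim θ α i ω) k :=
    funext fun k => funext (hη k)
  have hη_meas k : Measurable (η k) := by
    rw [hη_eta]
    exact (measurable_eta _ k).comp
      (measurable_pi_lambda (fun ω i => Sum.elim θ α i ω) (Sum.rec hmeas_θ hmeas_α))
  obtain ⟨hη_indep, hη_law⟩ : iIndepFun η μ ∧ ∀ k, μ.map (η k) = haarAddCircle := by
    rw [hη_eta]; exact iIndepFun_eta_and_map_eq hmeas_θ hmeas_α hindep hunif_θ _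
  obtain rfl : δ = fun k ω => (η (2 * k) ω, η (2 * k - 1) ω) := funext fun k => funext (hδ k)
  refine ⟨hη_indep.prodMk_of_injective hη_meas ?_, fun k => ?_⟩
  · rintro (a | a) (b | b) h <;> simp only [Sum.elim_inl, Sum.elim_inr] at h <;> simp <;> omega
  · rw [(indepFun_iff_map_prod_eq_prod_map_map (hη_meas _).aemeasurable (hη_meas _).aemeasurable).1
      (hη_indep.indepFun (by omega)), hη_law, hη_law]

/-- If the phases `θ_k, α_k` (`k ∈ ℤ`) are mutually independent and uniform on the torus
`𝕋 = ℝ/2πℤ`, then for any `λ ∈ ℝ` the vectors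
`δ_k = (η_{2k}, η_{2k−1})` with `η_k = θ_k + θ_{k−1} + α_k − α_{k−1} + λ` are i.i.d.,
uniformly distributed on `𝕋²`. -/
theorem delta_iid_uniform
    {Ω : Type*} [MeasurableSpace Ω] (μ : Measure Ω) [IsProbabilityMeasure μ]
    (θ α : ℤ → Ω → AddCircle (2 * Real.pi))
    (hmeas_θ : ∀ k, Measurable (θ k)) (hmeas_α : ∀ k, Measurable (α k))
    (hindep : iIndepFun (Sum.elim θ α) μ)
    (hunif_θ : ∀ k, μ.map (θ k) = haarAddCircle)
    (hunif_α : ∀ k, μ.map (α k) = haarAddCircle)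
    (lam : ℝ)
    (η : ℤ → Ω → AddCircle (2 * Real.pi))
    (hη : ∀ k ω, η k ω = θ k ω + θ (k - 1) ω + α k ω - α (k - 1) ω
      + (lam : AddCircle (2 * Real.pi)))
    (δ : ℤ → Ω → AddCircle (2 * Real.pi) × AddCircle (2 * Real.pi))
    (hδ : ∀ k ω, δ k ω = (η (2 * k) ω, η (2 * k - 1) ω)) :
    iIndepFun δ μ ∧
    ∀ k : ℤ, μ.map (δ k) =
      (haarAddCircle : Measure (AddCircle (2 * Real.pi))).prod haarAddCircle :=
  delta_iid_uniform_general μ θ α hmeas_θ hmeas_α hindep hunif_θ lam η hη δ hδ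
end

section
/- Let 0 < t < 1 and r = √(1−t²). The 4×4 real matrix τ(T_{(π,π)}) has eigenvalues (r−1)²/t² and (r+1)²/t², each of multiplicity two. Since (r+1)²/t² > 1, the subgroup of GL₄(ℝ) generated by τ(T_{(π,π)}) is unbounded; in particular, every subgroup of GL₄(ℝ) containing τ(T_{(π,π)}) is not compact. -/
/-!
At `θ = η = π` the matrix `T` is the Hermitian matrix `[[1, -2ir/t], [2ir/t, (3r² + 1)/t²]]`.
Its realification `τ T` splits into two copies of the real `2 × 2` block
`[[1, 2r/t], [2r/t, (3r² + 1)/t²]]` (up to the sign of the off-diagonal entry), whose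
eigenvalues are `(r ∓ 1)²/t²` because `r² + t² = 1`. The vector `(0, t, r + 1, 0)` is an
eigenvector of `τ T` for `(r + 1)²/t² > 1`, so its orbit under the powers of `τ T` is
unbounded, whereas the orbit of a vector under a compact subgroup of `GL₄(ℝ)` is bounded.
-/

open Matrix Complex Polynomial

/-- The algebra embedding `τ : M₂(ℂ) → M₄(ℝ)` replacing each entry `a` by the
`2×2` block `Re(a)I + Im(a)J`, with `J = [[0,1],[−1,0]]`. -/
noncomputable def tauMap (A : Matrix (Fin 2) (Fin 2) ℂ) : Matrix (Fin 4) (Fin 4) ℝ :=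
  !![(A 0 0).re,  (A 0 0).im,  (A 0 1).re,  (A 0 1).im;
     -(A 0 0).im, (A 0 0).re,  -(A 0 1).im, (A 0 1).re;
     (A 1 0).re,  (A 1 0).im,  (A 1 1).re,  (A 1 1).im;
     -(A 1 0).im, (A 1 0).re,  -(A 1 1).im, (A 1 1).re]

/-- The matrix `T_{(θ,η)}` built from transmission coefficient `t` and
reflection coefficient `r`. -/
noncomputable def Tmat (t r θ η : ℝ) : Matrix (Fin 2) (Fin 2) ℂ :=
  !![-Complex.exp (-Complex.I * θ),
     (Complex.I * r / t) * (Complex.exp (-Complex.I * θ) - 1);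
     -(Complex.I * r / t) * (Complex.exp (-Complex.I * θ) - Complex.exp (Complex.I * (η - θ))),
     -((r : ℂ)^2 / (t : ℂ)^2) *
        (Complex.exp (-Complex.I * θ) - 1 - Complex.exp (Complex.I * (η - θ)))
       - (1 / (t : ℂ)^2) * Complex.exp (Complex.I * η)]

def crossMatrix {R : Type*} [Zero R] [Neg R] (a c d : R) : Matrix (Fin 4) (Fin 4) R :=
  !![a, 0, 0, -c; 0, a, c, 0; 0, c, d, 0; -c, 0, 0, d]

theorem charpoly_crossMatrix {R : Type*} [CommRing R] (a c d : R) :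
    (crossMatrix a c d).charpoly = ((X - C a) * (X - C d) - C c ^ 2) ^ 2 := by
  rw [Matrix.charpoly, Matrix.det_succ_row_zero]
  simp [crossMatrix, Fin.sum_univ_succ, det_fin_three, charmatrix_apply, Fin.succAbove]
  ring

theorem X_sub_C_mul_X_sub_C_sub_C_sq {R : Type*} [CommRing R] {a d c l₁ l₂ : R}
    (hsum : l₁ + l₂ = a + d) (hprod : l₁ * l₂ = a * d - c ^ 2) :
    (X - C a) * (X - C d) - C c ^ 2 = (X - C l₁) * (X - C l₂) := by
  have hsum' := congrArg C hsum
  have hprod' := congrArg C hprod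
  simp only [map_add, map_mul, map_sub, map_pow] at hsum' hprod'
  linear_combination X * hsum' - hprod'

theorem not_isCompact_of_mulVec_eq_smul {n : Type*} [Fintype n] [DecidableEq n]
    {G : Subgroup (GL n ℝ)} {g : GL n ℝ} (hg : g ∈ G) {v : n → ℝ} (hv : v ≠ 0) {μ : ℝ}
    (hμ : 1 < |μ|) (hgv : (g : Matrix n n ℝ) *ᵥ v = μ • v) :
    ¬IsCompact (G : Set (GL n ℝ)) := by
  intro hG
  have hcont : Continuous fun u : GL n ℝ => (u : Matrix n n ℝ) *ᵥ v :=
    Units.continuous_val.matrix_mulVec continuous_const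
  obtain ⟨C, hC⟩ := (hG.image hcont).isBounded.exists_norm_le
  have hpow (k : ℕ) : ((g ^ k : GL n ℝ) : Matrix n n ℝ) *ᵥ v = μ ^ k • v := by
    induction k with
    | zero => simp
    | succ k ih =>
      rw [pow_succ', Units.val_mul, ← mulVec_mulVec, ih, mulVec_smul, hgv, smul_smul, ← pow_succ]
  obtain ⟨k, hk⟩ := pow_unbounded_of_one_lt (C / ‖v‖) hμ
  have hle : ‖((g ^ k : GL n ℝ) : Matrix n n ℝ) *ᵥ v‖ ≤ C := hC _ ⟨g ^ k, pow_mem hg k, rfl⟩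
  rw [hpow, norm_smul, norm_pow, Real.norm_eq_abs] at hle
  rw [div_lt_iff₀ (norm_pos_iff.2 hv)] at hk
  linarith

theorem tauMap_hermitian (a c d : ℝ) :
    tauMap !![(a : ℂ), -(c * I); c * I, d] = crossMatrix a c d := by
  ext i j
  fin_cases i <;> fin_cases j <;> simp [tauMap, crossMatrix]

theorem Tmat_pi_pi (t r : ℝ) :
    Tmat t r Real.pi Real.pi = !![((1 : ℝ) : ℂ), -(((2 * r / t : ℝ) : ℂ) * I);
      ((2 * r / t : ℝ) : ℂ) * I, (((3 * r ^ 2 + 1) / t ^ 2 : ℝ) : ℂ)] := by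
  have hneg : exp (-(I * Real.pi)) = -1 := by
    rw [mul_comm, Complex.exp_neg, exp_pi_mul_I]; norm_num
  have hpos : exp (I * Real.pi) = -1 := by rw [mul_comm, exp_pi_mul_I]
  ext i j
  fin_cases i <;> fin_cases j <;> simp [Tmat, hneg, hpos] <;> field_simp <;> ring

theorem crossMatrix_mulVec_eigenvector (t r : ℝ) (ht : t ≠ 0) (hrt : r ^ 2 + t ^ 2 = 1) :
    crossMatrix 1 (2 * r / t) ((3 * r ^ 2 + 1) / t ^ 2) *ᵥ ![0, t, r + 1, 0] =
      ((r + 1) ^ 2 / t ^ 2) • ![0, t, r + 1, 0] := by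
  ext i
  fin_cases i <;> simp [crossMatrix, mulVec, dotProduct, Fin.sum_univ_four] <;> field_simp
  · linear_combination hrt
  · linear_combination 2 * r * hrt

theorem charpoly_crossMatrix_eq (t r : ℝ) (ht : t ≠ 0) (hrt : r ^ 2 + t ^ 2 = 1) :
    (crossMatrix 1 (2 * r / t) ((3 * r ^ 2 + 1) / t ^ 2)).charpoly =
      ((X - C ((r - 1) ^ 2 / t ^ 2)) * (X - C ((r + 1) ^ 2 / t ^ 2))) ^ 2 := by
  rw [charpoly_crossMatrix, X_sub_C_mul_X_sub_C_sub_C_sq]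
  · field_simp
    linear_combination -hrt
  · field_simp
    linear_combination (r ^ 2 - 1) * hrt

theorem tau_T_pi_pi_noncompact (t r : ℝ) (ht : 0 < t) (ht1 : t < 1)
    (hr : r = Real.sqrt (1 - t ^ 2)) :
    -- τ(T_{(π,π)}) has eigenvalues (r−1)²/t² and (r+1)²/t², each of multiplicity two
    (tauMap (Tmat t r Real.pi Real.pi)).charpoly =
      ((X - C ((r - 1) ^ 2 / t ^ 2)) * (X - C ((r + 1) ^ 2 / t ^ 2))) ^ 2 ∧
    -- the larger eigenvalue exceeds 1
    1 < (r + 1) ^ 2 / t ^ 2 ∧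
    -- any subgroup of GL₄(ℝ) containing τ(T_{(π,π)}) is not compact
    (∀ G : Subgroup (GL (Fin 4) ℝ),
      (∃ g ∈ G, (g : Matrix (Fin 4) (Fin 4) ℝ) = tauMap (Tmat t r Real.pi Real.pi)) →
      ¬ IsCompact (G : Set (GL (Fin 4) ℝ))) := by
  have hr0 : 0 ≤ r := hr ▸ Real.sqrt_nonneg _
  have hrt : r ^ 2 + t ^ 2 = 1 := by
    rw [hr, Real.sq_sqrt (by nlinarith)]
    ring
  have hτ : tauMap (Tmat t r Real.pi Real.pi) =
      crossMatrix 1 (2 * r / t) ((3 * r ^ 2 + 1) / t ^ 2) := by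
    rw [Tmat_pi_pi, tauMap_hermitian]
  have hμ : 1 < (r + 1) ^ 2 / t ^ 2 := by
    rw [one_lt_div (by positivity)]
    nlinarith
  refine ⟨hτ ▸ charpoly_crossMatrix_eq t r ht.ne' hrt, hμ, ?_⟩
  rintro G ⟨g, hgG, hg⟩
  refine not_isCompact_of_mulVec_eq_smul hgG (v := ![0, t, r + 1, 0]) ?_
    (hμ.trans_le (le_abs_self _)) (hg ▸ hτ ▸ crossMatrix_mulVec_eigenvector t r ht.ne' hrt)
  intro hv
  simpa [ht.ne'] using congrFun hv 1
end

section
/- Let (φ_n)_{n∈ℤ} be an orthonormal basis of a separable complex Hilbert space H, let p ∈ ℕ, and let U be a bounded normal operator on H with band structure of order 2p+1, i.e. ⟨φ_j, U φ_k⟩ = 0 whenever |j−k| > p. Let z ∈ ℂ belong to the resolvent set of U, and let c = (c_k)_{k∈ℤ} ∈ ℂ^ℤ be a nonzero sequence satisfying the formal eigenvalue equation: for every j ∈ ℤ, Σ_{k: |k−j| ≤ p} ⟨φ_j, U φ_k⟩ c_k = z c_j. Then the sequence (c_k) is not polynomially bounded: there exist no constants C > 0 and m ∈ ℕ such that |c_k|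 ≤ C(1+|k|)^m for all k ∈ ℤ. -/
/-!
Since `z` lies in the resolvent set, `T = z - U` is invertible, so `‖x‖ ≤ ‖T⁻¹‖ ‖T x‖`. Apply this
to the truncations `v_R = ∑_{|k| ≤ R} c_k φ_k`. The matrix of `T` is banded and annihilates `c`
formally, so `⟪φ_j, T v_{R+L}⟫` vanishes when the window `[j - p, j + p]` lies inside
`[-(R+L), R+L]`; otherwise (for `L ≥ 2p`) the window misses `[-R, R]` and the coefficient equals
`⟪φ_j, T (v_{R+L} - v_R)⟫`. Hence `‖v_{R+L}‖ ≤ ‖T⁻¹‖ ‖T‖ ‖v_{R+L} - v_R‖`, i.e.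
`S(R+L) ≤ K (S(R+L) - S(R))` for the partial sums `S(R) = ∑_{|k| ≤ R} |c_k|²`. So `S` grows
geometrically along an arithmetic progression of radii, while a polynomial bound on `c` makes it
grow only polynomially.
-/

open Filter Finset Topology

section RealSequences

theorem le_mul_one_add_inv_pow_of_le_mul_sub {s : ℕ → ℝ} {K : ℝ} (hK : 0 < K) (hs : Monotone s)
    (h : ∀ n, s (n + 1) ≤ K * (s (n + 1) - s n)) (n : ℕ) : s 0 * (1 + K⁻¹) ^ n ≤ s n := by
  induction n with
  | zero => simp
  | succ n ih =>
    have hstep : s n * (1 + K⁻¹) ≤ s (n + 1) := by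
      have h' : s (n + 1) * K⁻¹ ≤ s (n + 1) - s n := by
        rw [← div_eq_mul_inv, div_le_iff₀' hK]; exact h n
      nlinarith [hs n.le_succ, inv_pos.mpr hK]
    calc s 0 * (1 + K⁻¹) ^ (n + 1) = s 0 * (1 + K⁻¹) ^ n * (1 + K⁻¹) := by ring
      _ ≤ s n * (1 + K⁻¹) := by gcongr
      _ ≤ s (n + 1) := hstep

theorem not_forall_mul_pow_le_mul_add_mul_pow {ε θ C a b : ℝ} (d : ℕ) (hε : 0 < ε) (hθ : 1 < θ)
    (ha : 0 ≤ a) (hb : 0 ≤ b) : ¬ ∀ n : ℕ, ε * θ ^ n ≤ C * (a + b * n) ^ d := by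
  intro h
  have hlim : Tendsto (fun n : ℕ => |C| * (a + b) ^ d * ((n : ℝ) ^ d / θ ^ n)) atTop (𝓝 0) := by
    simpa using (tendsto_pow_const_div_const_pow_of_one_lt d hθ).const_mul (|C| * (a + b) ^ d)
  obtain ⟨n, hsmall, hn⟩ := ((hlim.eventually (gt_mem_nhds hε)).and (eventually_ge_atTop 1)).exists
  have hθn : 0 < θ ^ n := by positivity
  have hn' : (1 : ℝ) ≤ n := by exact_mod_cast hn
  have hlin : a + b * n ≤ (a + b) * n := by nlinarith
  have hpoly : C * (a + b * n) ^ d ≤ |C| * (a + b) ^ d * (n : ℝ) ^ d := by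
    calc C * (a + b * n) ^ d ≤ |C| * (a + b * n) ^ d := by gcongr; exact le_abs_self C
      _ ≤ |C| * ((a + b) * n) ^ d := by gcongr
      _ = |C| * (a + b) ^ d * (n : ℝ) ^ d := by rw [mul_pow]; ring
  have hbig := (h n).trans hpoly
  rw [mul_div, div_lt_iff₀ hθn] at hsmall
  linarith

end RealSequences

section InnerProductSpace

variable {𝕜 E ι : Type*} [RCLike 𝕜] [NormedAddCommGroup E] [InnerProductSpace 𝕜 E]

theorem Orthonormal.norm_sum_smul_sq {v : ι → E} (hv : Orthonormal 𝕜 v) (l : ι → 𝕜)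
    (s : Finset ι) : ‖∑ i ∈ s, l i • v i‖ ^ 2 = ∑ i ∈ s, ‖l i‖ ^ 2 := by
  apply RCLike.ofReal_injective (K := 𝕜)
  push_cast
  rw [← inner_self_eq_norm_sq_to_K, hv.inner_sum]
  exact sum_congr rfl fun i _ => RCLike.conj_mul (l i)

theorem HilbertBasis.norm_le_norm_of_forall_norm_inner_le (b : HilbertBasis ι 𝕜 E) {x y : E}
    (h : ∀ i, ‖inner 𝕜 (b i) x‖ ≤ ‖inner 𝕜 (b i) y‖) : ‖x‖ ≤ ‖y‖ := by
  rw [← b.repr.norm_map x, ← b.repr.norm_map y]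
  exact lp.norm_mono (by norm_num) fun i => by simpa only [b.repr_apply_apply] using h i

theorem Units.norm_le_norm_inv_mul_norm_apply (u : (E →L[𝕜] E)ˣ) (x : E) :
    ‖x‖ ≤ ‖(↑u⁻¹ : E →L[𝕜] E)‖ * ‖(u : E →L[𝕜] E) x‖ := by
  calc ‖x‖ = ‖(↑u⁻¹ : E →L[𝕜] E) ((u : E →L[𝕜] E) x)‖ := by
        rw [← mul_apply_eq_comp, u.inv_mul, one_apply_eq_self]
    _ ≤ _ := ContinuousLinearMap.le_opNorm _ _

end InnerProductSpace

section BandedOperators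

variable {𝕜 H : Type*} [RCLike 𝕜] [NormedAddCommGroup H] [InnerProductSpace 𝕜 H]

noncomputable def truncatedSqNorm (c : ℤ → 𝕜) (R : ℕ) : ℝ :=
  ∑ k ∈ Icc (-(R : ℤ)) R, ‖c k‖ ^ 2

theorem truncatedSqNorm_mono (c : ℤ → 𝕜) : Monotone (truncatedSqNorm c) := fun _ _ hRR' =>
  sum_le_sum_of_subset_of_nonneg (Icc_subset_Icc (by omega) (by omega)) fun k _ _ => sq_nonneg ‖c k‖

theorem truncatedSqNorm_le_of_norm_le {c : ℤ → 𝕜} {C : ℝ} {m : ℕ}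
    (hc : ∀ k, ‖c k‖ ≤ C * (1 + |(k : ℝ)|) ^ m) (R : ℕ) :
    truncatedSqNorm c R ≤ 2 * C ^ 2 * (1 + R) ^ (2 * m + 1) := by
  have hC : 0 ≤ C := by simpa using (norm_nonneg (c 0)).trans (hc 0)
  have hterm : ∀ k ∈ Icc (-(R : ℤ)) R, ‖c k‖ ^ 2 ≤ (C * (1 + R) ^ m) ^ 2 := by
    intro k hk
    have hkR : |(k : ℝ)| ≤ R := by
      rw [← Int.cast_abs, ← Int.cast_natCast]; exact_mod_cast abs_le.mpr (mem_Icc.mp hk)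
    gcongr
    exact (hc k).trans (by gcongr)
  have hcard : ((Icc (-(R : ℤ)) R).card : ℝ) = 2 * R + 1 := by
    have : ((Icc (-(R : ℤ)) R).card : ℤ) = 2 * R + 1 := by rw [Int.card_Icc]; omega
    exact_mod_cast this
  calc truncatedSqNorm c R ≤ ∑ _k ∈ Icc (-(R : ℤ)) R, (C * (1 + R) ^ m) ^ 2 := sum_le_sum hterm
    _ = (2 * R + 1) * (C * (1 + R) ^ m) ^ 2 := by rw [sum_const, nsmul_eq_mul, hcard]
    _ ≤ 2 * (1 + R) * (C * (1 + R) ^ m) ^ 2 := by gcongr; linarith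
    _ = 2 * C ^ 2 * (1 + R) ^ (2 * m + 1) := by ring

def IsBanded (b : HilbertBasis ℤ 𝕜 H) (T : H →L[𝕜] H) (p : ℕ) : Prop :=
  ∀ j k : ℤ, (p : ℤ) < |j - k| → inner 𝕜 (b j) (T (b k)) = 0

theorem inner_algebraMap_sub_apply (b : HilbertBasis ℤ 𝕜 H) (T : H →L[𝕜] H) (z : 𝕜) (j k : ℤ) :
    inner 𝕜 (b j) ((algebraMap 𝕜 (H →L[𝕜] H) z - T) (b k))
      = (if j = k then z else 0) - inner 𝕜 (b j) (T (b k)) := by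
  simp [Algebra.algebraMap_eq_smul_one, inner_sub_right, inner_smul_right,
    orthonormal_iff_ite.mp b.orthonormal]

theorem IsBanded.algebraMap_sub {b : HilbertBasis ℤ 𝕜 H} {T : H →L[𝕜] H} {p : ℕ}
    (hT : IsBanded b T p) (z : 𝕜) : IsBanded b (algebraMap 𝕜 (H →L[𝕜] H) z - T) p := by
  intro j k hjk
  have hne : j ≠ k := by rintro rfl; simp only [sub_self, abs_zero] at hjk; omega
  rw [inner_algebraMap_sub_apply, if_neg hne, hT j k hjk, sub_zero]

theorem sum_inner_algebraMap_sub_apply_mul (b : HilbertBasis ℤ 𝕜 H) (T : H →L[𝕜] H) (z : 𝕜)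
    (c : ℤ → 𝕜) (j : ℤ) (p : ℕ) :
    ∑ k ∈ Icc (j - p) (j + p), inner 𝕜 (b j) ((algebraMap 𝕜 (H →L[𝕜] H) z - T) (b k)) * c k
      = z * c j - ∑ k ∈ Icc (j - p) (j + p), inner 𝕜 (b j) (T (b k)) * c k := by
  simp only [inner_algebraMap_sub_apply, sub_mul, sum_sub_distrib, ite_mul, zero_mul,
    sum_ite_eq, mem_Icc]
  rw [if_pos ⟨by omega, by omega⟩]

theorem inner_apply_sum_smul (b : HilbertBasis ℤ 𝕜 H) (T : H →L[𝕜] H) (c : ℤ → 𝕜)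
    (s : Finset ℤ) (j : ℤ) :
    inner 𝕜 (b j) (T (∑ k ∈ s, c k • b k)) = ∑ k ∈ s, inner 𝕜 (b j) (T (b k)) * c k := by
  simp [inner_sum, inner_smul_right, mul_comm]

section FormalKernel

variable {b : HilbertBasis ℤ 𝕜 H} {T : H →L[𝕜] H} {p : ℕ} {c : ℤ → 𝕜}

theorem IsBanded.sum_inner_apply_mul_eq_of_subset (hT : IsBanded b T p) {s t : Finset ℤ} {j : ℤ}
    (hst : s ⊆ t) (hfar : ∀ k ∈ t, k ∉ s → (p : ℤ) < |j - k|) :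
    ∑ k ∈ s, inner 𝕜 (b j) (T (b k)) * c k = ∑ k ∈ t, inner 𝕜 (b j) (T (b k)) * c k :=
  sum_subset hst fun k hkt hks => by rw [hT j k (hfar k hkt hks), zero_mul]

theorem IsBanded.norm_apply_sum_Icc_le_norm_apply_sum_sdiff (hT : IsBanded b T p)
    (hker : ∀ j : ℤ, ∑ k ∈ Icc (j - p) (j + p), inner 𝕜 (b j) (T (b k)) * c k = 0)
    {R L : ℕ} (hL : 2 * p ≤ L) :
    ‖T (∑ k ∈ Icc (-(R + L : ℤ)) (R + L), c k • b k)‖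
      ≤ ‖T (∑ k ∈ Icc (-(R + L : ℤ)) (R + L) \ Icc (-(R : ℤ)) R, c k • b k)‖ := by
  refine b.norm_le_norm_of_forall_norm_inner_le fun j => ?_
  simp only [inner_apply_sum_smul]
  by_cases hwin : Icc (j - p) (j + p) ⊆ Icc (-(R + L : ℤ)) (R + L)
  · rw [← hT.sum_inner_apply_mul_eq_of_subset hwin, hker, norm_zero]
    · exact norm_nonneg _
    · intro k _ hk
      simp only [mem_Icc, not_and_or, not_le] at hk
      rw [lt_abs, neg_sub]
      omega
  · obtain ⟨k', hk'win, hk'⟩ := not_subset.mp hwin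
    simp only [mem_Icc, not_and_or, not_le] at hk'win hk'
    rw [hT.sum_inner_apply_mul_eq_of_subset sdiff_subset]
    intro k hkt hk
    have hkR : k ∈ Icc (-(R : ℤ)) R := by_contra fun h => hk (mem_sdiff.mpr ⟨hkt, h⟩)
    rw [mem_Icc] at hkR
    rw [lt_abs, neg_sub]
    omega

theorem IsBanded.truncatedSqNorm_add_le_mul_sub (hT : IsBanded b T p)
    (hker : ∀ j : ℤ, ∑ k ∈ Icc (j - p) (j + p), inner 𝕜 (b j) (T (b k)) * c k = 0)
    {M : ℝ} (hM : 0 ≤ M) (hbelow : ∀ x, ‖x‖ ≤ M * ‖T x‖) {R L : ℕ} (hL : 2 * p ≤ L) :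
    truncatedSqNorm c (R + L)
      ≤ (M * ‖T‖) ^ 2 * (truncatedSqNorm c (R + L) - truncatedSqNorm c R) := by
  have hsub : Icc (-(R : ℤ)) R ⊆ Icc (-(R + L : ℤ)) (R + L) := Icc_subset_Icc (by omega) (by omega)
  set v := ∑ k ∈ Icc (-(R + L : ℤ)) (R + L), c k • b k
  set w := ∑ k ∈ Icc (-(R + L : ℤ)) (R + L) \ Icc (-(R : ℤ)) R, c k • b k
  have hv : ‖v‖ ^ 2 = truncatedSqNorm c (R + L) := by
    rw [b.orthonormal.norm_sum_smul_sq, truncatedSqNorm, Nat.cast_add]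
  have hw : ‖w‖ ^ 2 = truncatedSqNorm c (R + L) - truncatedSqNorm c R := by
    rw [b.orthonormal.norm_sum_smul_sq, sum_sdiff_eq_sub hsub, truncatedSqNorm, truncatedSqNorm,
      Nat.cast_add]
  have hvw : ‖v‖ ≤ M * ‖T‖ * ‖w‖ :=
    calc ‖v‖ ≤ M * ‖T v‖ := hbelow v
      _ ≤ M * ‖T w‖ := by gcongr; exact hT.norm_apply_sum_Icc_le_norm_apply_sum_sdiff hker hL
      _ ≤ M * (‖T‖ * ‖w‖) := by gcongr; exact T.le_opNorm w
      _ = M * ‖T‖ * ‖w‖ := by ring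
  rw [← hw, ← hv, ← mul_pow]
  exact pow_le_pow_left₀ (norm_nonneg v) hvw 2

end FormalKernel

end BandedOperators

theorem banded_normal_resolvent_eigenvector_not_poly_bounded_general
    {H : Type*} [NormedAddCommGroup H] [InnerProductSpace ℂ H] [CompleteSpace H]
    (b : HilbertBasis ℤ ℂ H) (p : ℕ) (U : H →L[ℂ] H)
    (hband : ∀ j k : ℤ, (p : ℤ) < |j - k| → inner (𝕜 := ℂ) (b j) (U (b k)) = 0)
    (z : ℂ) (hz : z ∉ spectrum ℂ U)
    (c : ℤ → ℂ) (hc0 : c ≠ 0)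
    (hc : ∀ j : ℤ, ∑ k ∈ Finset.Icc (j - (p : ℤ)) (j + (p : ℤ)),
      inner (𝕜 := ℂ) (b j) (U (b k)) * c k = z * c j) :
    ¬ ∃ (C : ℝ) (m : ℕ), 0 < C ∧
      ∀ k : ℤ, ‖c k‖ ≤ C * ((1 : ℝ) + |(k : ℝ)|) ^ m := by
  rintro ⟨C, m, -, hpoly⟩
  obtain ⟨u, hu⟩ := spectrum.notMem_iff.mp hz
  have hTband : IsBanded b (u : H →L[ℂ] H) p := hu ▸ IsBanded.algebraMap_sub hband z
  have hker (j : ℤ) :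
      ∑ k ∈ Icc (j - p) (j + p), inner ℂ (b j) ((u : H →L[ℂ] H) (b k)) * c k = 0 := by
    rw [hu, sum_inner_algebraMap_sub_apply_mul, hc, sub_self]
  obtain ⟨k₀, hk₀⟩ := Function.ne_iff.mp hc0
  have : Nontrivial H := ⟨⟨b 0, 0, b.orthonormal.ne_zero 0⟩⟩
  set K := (‖(↑u⁻¹ : H →L[ℂ] H)‖ * ‖(u : H →L[ℂ] H)‖) ^ 2
  have hK : 0 < K := by
    have hinv := norm_pos_iff.mpr u⁻¹.ne_zero
    have hunit := norm_pos_iff.mpr u.ne_zero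
    positivity
  set s : ℕ → ℝ := fun n => truncatedSqNorm c (k₀.natAbs + n * (2 * p + 1))
  have hs0 : 0 < s 0 := (pow_pos (norm_pos_iff.mpr hk₀) 2).trans_le <|
    single_le_sum (fun k _ => sq_nonneg ‖c k‖) (mem_Icc.mpr (by omega))
  have hmono : Monotone s := (truncatedSqNorm_mono c).comp fun _ _ h => by gcongr
  have hgrowth := le_mul_one_add_inv_pow_of_le_mul_sub hK hmono fun n => by
    simpa [s, add_mul, add_assoc] using hTband.truncatedSqNorm_add_le_mul_sub hker (norm_nonneg _)
      u.norm_le_norm_inv_mul_norm_apply (R := k₀.natAbs + n * (2 * p + 1)) (L := 2 * p + 1)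
      (by omega)
  refine not_forall_mul_pow_le_mul_add_mul_pow (2 * m + 1) hs0 (θ := 1 + K⁻¹) (C := 2 * C ^ 2)
    (a := 1 + k₀.natAbs) (b := 2 * p + 1) (by simpa using hK) (by positivity) (by positivity)
    fun n => (hgrowth n).trans ?_
  exact (truncatedSqNorm_le_of_norm_le hpoly _).trans_eq (by push_cast; ring)

/-- A formal (generalized) eigenvector of a banded normal operator for a point `z` of the
resolvent set is never polynomially bounded. -/
theorem banded_normal_resolvent_eigenvector_not_poly_bounded
    {H : Type*} [NormedAddCommGroup H] [InnerProductSpace ℂ H] [CompleteSpace H]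
    (b : HilbertBasis ℤ ℂ H) (p : ℕ) (U : H →L[ℂ] H) (hnormal : IsStarNormal U)
    (hband : ∀ j k : ℤ, (p : ℤ) < |j - k| → inner (𝕜 := ℂ) (b j) (U (b k)) = 0)
    (z : ℂ) (hz : z ∉ spectrum ℂ U)
    (c : ℤ → ℂ) (hc0 : c ≠ 0)
    (hc : ∀ j : ℤ, ∑ k ∈ Finset.Icc (j - (p : ℤ)) (j + (p : ℤ)),
      inner (𝕜 := ℂ) (b j) (U (b k)) * c k = z * c j) :
    ¬ ∃ (C : ℝ) (m : ℕ), 0 < C ∧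
      ∀ k : ℤ, ‖c k‖ ≤ C * ((1 : ℝ) + |(k : ℝ)|) ^ m :=
  banded_normal_resolvent_eigenvector_not_poly_bounded_general b p U hband z hz c hc0 hc
end
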